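/- Let A ∈ ℝ^{m×n}, b ∈ ℝ^m, set C = AᵀA and d = Aᵀb, and suppose the diagonal entry c_{kk} ≠ 0. Then the coordinate update t* = (b − Σ_{j≠k} x_j a_j)ᵀ a_k / (a_kᵀ a_k) of the penetrating gradient algorithm equals the Gauss–Seidel update (d_k − Σ_{j≠k} c_{kj} x_j)/c_{kk} for the normal equations Cx = d. -/
import Mathlib


open Matrix

/-- The penetrating-gradient coordinate update for `Ax = b` equals the
Gauss–Seidel update for the normal equations `Cx = d`, `C = AᵀA`, `d = Aᵀb`. -/
theorem pg_update_eq_gauss_seidel (m n : ℕ)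
    (A : Matrix (Fin m) (Fin n) ℝ) (b : Fin m → ℝ) (x : Fin n → ℝ) (k : Fin n)
    (C : Matrix (Fin n) (Fin n) ℝ) (hC : C = Aᵀ * A)
    (d : Fin n → ℝ) (hd : d = Aᵀ.mulVec b)
    (hkk : C k k ≠ 0) :
    ((b - fun i => ∑ j ∈ Finset.univ.erase k, x j * A i j) ⬝ᵥ (fun i => A i k))
        / ((fun i => A i k) ⬝ᵥ (fun i => A i k))
      = (d k - ∑ j ∈ Finset.univ.erase k, C k j * x j) / C k k := by
  subst hC hd
  have hden : ((fun i => A i k) ⬝ᵥ (fun i => A i k)) = (Aᵀ * A) k k := by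
    simp [dotProduct, Matrix.mul_apply, transpose_apply]
  have hnum : ((b - fun i => ∑ j ∈ Finset.univ.erase k, x j * A i j) ⬝ᵥ (fun i => A i k))
      = (Aᵀ.mulVec b) k - ∑ j ∈ Finset.univ.erase k, (Aᵀ * A) k j * x j := by
    simp only [dotProduct, mulVec, Matrix.mul_apply, transpose_apply, Pi.sub_apply,
      sub_mul, Finset.sum_sub_distrib, Finset.sum_mul, Finset.mul_sum]
    congr 1
    · exact Finset.sum_congr rfl fun i _ => by ring
    · rw [Finset.sum_comm]
      exact Finset.sum_congr rfl fun j _ => Finset.sum_congr rfl fun i _ => by ring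
  rw [hden, hnum]
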